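/- arXiv:1707.06360 — 2 statements merged into one kernel-verified Lean document; each statement's English description precedes it below -/
import Mathlib

section
/- Let B be a V×V real symmetric matrix with eigenvalues σ_1(B) ≥ … ≥ σ_V(B) in decreasing order. Let K ≤ V and let λ_1 ≥ … ≥ λ_k > 0 > λ_{k+1} ≥ … ≥ λ_K be real numbers (k of them positive, K−k negative). Then for every orthonormal family u_1,…,u_K in ℝ^V, ∑_{j=1}^K λ_j · uⱼᵀ B uⱼ ≤ ∑_{j=1}^k λ_j σ_j(B) + ∑_{j=k+1}^K λ_j σ_{V−K+j}(B), and equality is attained by choosing u_1,…,u_k to be orthonormal eigenvectors of B for the k largest eigenvalues σ_1(B),…,σ_k(B) and u_{k+1},…,u_K to be orthonormal eigenvectors for the K−k smallest eigenvalues σ_{V−K+k+1}(B),…,σ_V(B). -/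
open Matrix BigOperators

/-- The index map sending `j < k` to `j` (top eigenvalues) and `j ≥ k` to
`V - K + j` (bottom eigenvalues). -/
def mgrafIdx (V K k : ℕ) (hKV : K ≤ V) (j : Fin K) : Fin V :=
  if (j : ℕ) < k then ⟨j, lt_of_lt_of_le j.isLt hKV⟩
  else ⟨V - K + j, by have := j.isLt; omega⟩

/-! Writing each `u j` in the eigenbasis gives `∑_{j<m} u jᵀ B u j = ∑ i, σ i * t i` with
weights `0 ≤ t i ≤ 1` (Bessel) of total mass `m` (Parseval), and such a sum is at most the sum
of the `m` largest `σ i`: this is Ky Fan's inequality for every prefix of the family. Abel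
summation against the decreasing nonnegative weights `λ 0 ≥ … ≥ λ (k-1)` turns the prefix bounds
into the bound for the positive part; the negative part is the same statement for `-B`, with
the indices reversed. -/

open Finset

theorem sum_mul_le_sum_of_sum_eq_card {ι : Type*} [Fintype ι] [DecidableEq ι] {σ t : ι → ℝ}
    (S : Finset ι) (hσ : ∀ i ∈ S, ∀ j ∉ S, σ j ≤ σ i) (ht0 : ∀ i, 0 ≤ t i)
    (ht1 : ∀ i, t i ≤ 1) (ht : ∑ i, t i = #S) :
    ∑ i, σ i * t i ≤ ∑ i ∈ S, σ i := by
  obtain ⟨c, hcS, hcSc⟩ : ∃ c, (∀ i ∈ S, c ≤ σ i) ∧ ∀ j ∉ S, σ j ≤ c := by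
    rcases S.eq_empty_or_nonempty with rfl | hS
    · obtain ⟨c, hc⟩ := (Set.finite_range σ).bddAbove
      exact ⟨c, by simp, fun j _ => hc ⟨j, rfl⟩⟩
    · exact ⟨S.inf' hS σ, fun i hi => inf'_le σ hi,
        fun j hj => le_inf' hS σ fun i hi => hσ i hi j hj⟩
  calc ∑ i, σ i * t i = ∑ i ∈ S, σ i * t i + ∑ i ∈ Sᶜ, σ i * t i := (sum_add_sum_compl S _).symm
    _ ≤ ∑ i ∈ S, (σ i + c * (t i - 1)) + ∑ i ∈ Sᶜ, c * t i := by
      gcongr with i hi i hi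
      · nlinarith [hcS i hi, ht1 i]
      · exact ht0 i
      · exact hcSc i (mem_compl.1 hi)
    _ = ∑ i ∈ S, σ i + c * (∑ i, t i - #S) := by
      rw [← sum_add_sum_compl S t, sum_add_distrib, ← mul_sum, ← mul_sum, sum_sub_distrib,
        card_eq_sum_ones, Nat.cast_sum, Nat.cast_one]
      ring
    _ = ∑ i ∈ S, σ i := by rw [ht, sub_self, mul_zero, add_zero]

theorem sum_mul_le_sum_mul_of_partial_sum_le {n : ℕ} {w x y : Fin n → ℝ} (hw : Antitone w)
    (hw0 : ∀ j, 0 ≤ w j)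
    (hxy : ∀ m (hm : m ≤ n), ∑ j : Fin m, x (Fin.castLE hm j) ≤ ∑ j : Fin m, y (Fin.castLE hm j)) :
    ∑ j, w j * x j ≤ ∑ j, w j * y j := by
  induction n with
  | zero => simp
  | succ n ih =>
    set a := w (Fin.last n)
    have split : ∀ z : Fin (n + 1) → ℝ, ∑ j, w j * z j
        = ∑ j : Fin n, (w j.castSucc - a) * z j.castSucc + a * ∑ j, z j := by
      intro z
      simp only [Fin.sum_univ_castSucc, sub_mul, sum_sub_distrib, mul_add, mul_sum]
      ring
    rw [split x, split y]
    gcongr ?_ + a * ?_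
    · exact ih (fun i j hij => sub_le_sub_right (hw (Fin.castSucc_le_castSucc_iff.2 hij)) _)
        (fun j => sub_nonneg.2 (hw (Fin.castSucc_lt_last j).le))
        (fun m hm => hxy m (hm.trans n.le_succ))
    · exact hw0 _
    · simpa using hxy (n + 1) le_rfl

variable {n ι : Type*} [Fintype n] [DecidableEq ι]

def OrthonormalFamily (u : ι → n → ℝ) : Prop :=
  ∀ i j, u i ⬝ᵥ u j = if i = j then 1 else 0

theorem OrthonormalFamily.comp {κ : Type*} [DecidableEq κ] {u : ι → n → ℝ}
    (hu : OrthonormalFamily u) {f : κ → ι} (hf : Function.Injective f) :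
    OrthonormalFamily (u ∘ f) := fun i j => by
  simpa only [Function.comp_apply, hf.eq_iff] using hu (f i) (f j)

theorem OrthonormalFamily.sum_sq_dotProduct_le {u : ι → n → ℝ} (hu : OrthonormalFamily u)
    (s : Finset ι) (x : n → ℝ) : ∑ j ∈ s, (u j ⬝ᵥ x) ^ 2 ≤ x ⬝ᵥ x := by
  have hon : Orthonormal ℝ fun j => WithLp.toLp 2 (u j) := by
    rw [orthonormal_iff_ite]
    intro i j
    rw [EuclideanSpace.inner_toLp_toLp, star_trivial, dotProduct_comm, hu]
  have := hon.sum_inner_products_le (s := s) (WithLp.toLp 2 x)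
  simp only [EuclideanSpace.inner_toLp_toLp, star_trivial, Real.norm_eq_abs, sq_abs] at this
  rw [← real_inner_self_eq_norm_sq, EuclideanSpace.inner_toLp_toLp, star_trivial] at this
  simpa only [dotProduct_comm x] using this

section Eigenbasis

variable [DecidableEq n] {e : n → n → ℝ}

theorem OrthonormalFamily.transpose_mul_self (he : OrthonormalFamily e) : (of e)ᵀ * of e = 1 := by
  rw [mul_eq_one_comm]
  ext i j
  exact he i j

theorem OrthonormalFamily.sum_sq_dotProduct (he : OrthonormalFamily e) (v : n → ℝ) :
    ∑ i, (e i ⬝ᵥ v) ^ 2 = v ⬝ᵥ v := by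
  calc ∑ i, (e i ⬝ᵥ v) ^ 2 = (of e *ᵥ v) ⬝ᵥ (of e *ᵥ v) := by simp only [dotProduct, sq]; rfl
    _ = v ⬝ᵥ v := by
      rw [dotProduct_mulVec, ← vecMul_transpose, vecMul_vecMul, he.transpose_mul_self, vecMul_one]

theorem OrthonormalFamily.dotProduct_mulVec_eq_sum (he : OrthonormalFamily e)
    {B : Matrix n n ℝ} {σ : n → ℝ} (heig : ∀ i, B *ᵥ e i = σ i • e i) (v : n → ℝ) :
    v ⬝ᵥ B *ᵥ v = ∑ i, σ i * (e i ⬝ᵥ v) ^ 2 := by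
  have hBE : B * (of e)ᵀ = (of e)ᵀ * diagonal σ := by
    ext i j
    rw [mul_diagonal, mul_apply]
    simpa only [mulVec, dotProduct, Pi.smul_apply, smul_eq_mul, transpose_apply, of_apply,
      mul_comm (σ j)] using congrFun (heig j) i
  have hB : B = (of e)ᵀ * diagonal σ * of e := by
    rw [← hBE, Matrix.mul_assoc, he.transpose_mul_self, Matrix.mul_one]
  rw [hB, ← mulVec_mulVec, ← mulVec_mulVec, dotProduct_mulVec, vecMul_transpose, dotProduct]
  simp only [mulVec_diagonal, sq]
  exact sum_congr rfl fun i _ => by rw [mul_comm, mul_assoc]; rfl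

end Eigenbasis

section KyFan

variable {V : ℕ} {B : Matrix (Fin V) (Fin V) ℝ} {σ : Fin V → ℝ} {e : Fin V → Fin V → ℝ}

theorem sum_dotProduct_mulVec_le_sum_eigenvalues (hσ : Antitone σ) (he : OrthonormalFamily e)
    (heig : ∀ i, B *ᵥ e i = σ i • e i) {m : ℕ} (hm : m ≤ V) {u : Fin m → Fin V → ℝ}
    (hu : OrthonormalFamily u) :
    ∑ j, u j ⬝ᵥ B *ᵥ u j ≤ ∑ j, σ (Fin.castLE hm j) := by
  set S := univ.map (Fin.castLEEmb hm)
  have hS : ∀ i, i ∈ S ↔ (i : ℕ) < m := fun i => by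
    rw [← mem_coe, coe_map, coe_univ, Set.image_univ, Fin.coe_castLEEmb, Fin.range_castLE]
    rfl
  calc ∑ j, u j ⬝ᵥ B *ᵥ u j = ∑ i, σ i * ∑ j, (u j ⬝ᵥ e i) ^ 2 := by
        simp_rw [he.dotProduct_mulVec_eq_sum heig, mul_sum, dotProduct_comm (e _)]
        exact sum_comm
    _ ≤ ∑ i ∈ S, σ i := by
      refine sum_mul_le_sum_of_sum_eq_card S (fun i hi j hj => hσ ?_)
        (fun i => sum_nonneg fun j _ => sq_nonneg _) (fun i => ?_) ?_
      · rw [hS] at hi hj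
        exact Fin.le_def.2 (by omega)
      · simpa [he i i] using hu.sum_sq_dotProduct_le univ (e i)
      · rw [sum_comm]
        simp [dotProduct_comm _ (e _), he.sum_sq_dotProduct, hu _ _, S]
    _ = ∑ j, σ (Fin.castLE hm j) := sum_map _ _ _

theorem sum_mul_dotProduct_mulVec_le_of_nonneg (hσ : Antitone σ) (he : OrthonormalFamily e)
    (heig : ∀ i, B *ᵥ e i = σ i • e i) {m : ℕ} (hm : m ≤ V) {u : Fin m → Fin V → ℝ}
    (hu : OrthonormalFamily u) {w : Fin m → ℝ} (hw : Antitone w) (hw0 : ∀ j, 0 ≤ w j) :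
    ∑ j, w j * (u j ⬝ᵥ B *ᵥ u j) ≤ ∑ j, w j * σ (Fin.castLE hm j) :=
  sum_mul_le_sum_mul_of_partial_sum_le hw hw0 fun _ hl =>
    sum_dotProduct_mulVec_le_sum_eigenvalues hσ he heig (hl.trans hm)
      (hu.comp (Fin.castLE_injective hl))

theorem sum_mul_dotProduct_mulVec_le_of_nonpos (hσ : Antitone σ) (he : OrthonormalFamily e)
    (heig : ∀ i, B *ᵥ e i = σ i • e i) {m : ℕ} (hm : m ≤ V) {u : Fin m → Fin V → ℝ}
    (hu : OrthonormalFamily u) {w : Fin m → ℝ} (hw : Antitone w) (hw0 : ∀ j, w j ≤ 0) :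
    ∑ j, w j * (u j ⬝ᵥ B *ᵥ u j) ≤ ∑ j, w j * σ ⟨V - m + j, by omega⟩ := by
  have := sum_mul_dotProduct_mulVec_le_of_nonneg
    (B := -B) (σ := fun i => -σ i.rev) (e := e ∘ Fin.rev)
    (fun i j hij => neg_le_neg (hσ (Fin.rev_le_rev.2 hij))) (he.comp Fin.rev_injective)
    (fun i => by simp [neg_mulVec, heig]) hm (hu.comp Fin.rev_injective)
    (w := fun j => -w j.rev) (fun i j hij => neg_le_neg (hw (Fin.rev_le_rev.2 hij)))
    (fun j => neg_nonneg.2 (hw0 _))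
  rw [← Fintype.sum_equiv Fin.revPerm _ _ fun _ => rfl,
    ← Fintype.sum_equiv Fin.revPerm _ (fun j => w j * σ ⟨V - m + j, by omega⟩) fun _ => rfl]
  convert this using 2 with j _ j _
  · simp [neg_mulVec]
  · simp only [Fin.revPerm_apply, neg_mul_neg]
    congr 3
    simp only [Fin.val_rev, Fin.val_castLE]
    omega

end KyFan

theorem mgrafIdx_castAdd {V k m : ℕ} (h : k + m ≤ V) (j : Fin k) :
    mgrafIdx V (k + m) k h (Fin.castAdd m j) = Fin.castLE (by omega) j := by
  simp [mgrafIdx, Fin.ext_iff]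

theorem mgrafIdx_natAdd {V k m : ℕ} (h : k + m ≤ V) (j : Fin m) :
    mgrafIdx V (k + m) k h (Fin.natAdd k j) = ⟨V - m + j, by omega⟩ := by
  simp only [mgrafIdx, Fin.val_natAdd, Nat.not_lt.2 (Nat.le_add_right k j), if_false,
    Fin.mk.injEq]
  omega

theorem weighted_rayleigh_sum_mixed_signs_general
    (V K k : ℕ) (hKV : K ≤ V) (hkK : k ≤ K)
    (B : Matrix (Fin V) (Fin V) ℝ)
    (σ : Fin V → ℝ) (hσ : Antitone σ)
    (e : Fin V → (Fin V → ℝ))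
    (he : ∀ i j : Fin V, e i ⬝ᵥ e j = if i = j then 1 else 0)
    (heig : ∀ j : Fin V, B.mulVec (e j) = σ j • e j)
    (lam : Fin K → ℝ) (hlam : Antitone lam)
    (hpos : ∀ j : Fin K, (j : ℕ) < k → 0 < lam j)
    (hneg : ∀ j : Fin K, k ≤ (j : ℕ) → lam j < 0) :
    (∀ u : Fin K → (Fin V → ℝ),
      (∀ i j : Fin K, u i ⬝ᵥ u j = if i = j then 1 else 0) →
      ∑ j : Fin K, lam j * (u j ⬝ᵥ B.mulVec (u j)) ≤
        ∑ j : Fin K, lam j * σ (mgrafIdx V K k hKV j)) ∧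
    ∑ j : Fin K, lam j *
        (e (mgrafIdx V K k hKV j) ⬝ᵥ B.mulVec (e (mgrafIdx V K k hKV j)))
      = ∑ j : Fin K, lam j * σ (mgrafIdx V K k hKV j) := by
  refine ⟨fun u hu => ?_, sum_congr rfl fun j _ => ?_⟩
  · obtain ⟨m, rfl⟩ := Nat.exists_eq_add_of_le hkK
    simp only [Fin.sum_univ_add, mgrafIdx_castAdd, mgrafIdx_natAdd]
    exact add_le_add
      (sum_mul_dotProduct_mulVec_le_of_nonneg hσ he heig (by omega) (u := u ∘ Fin.castAdd m)
        (OrthonormalFamily.comp hu (Fin.castAdd_injective k m)) (w := lam ∘ Fin.castAdd m)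
        (hlam.comp_monotone (Fin.strictMono_castAdd m).monotone)
        fun j => (hpos _ j.isLt).le)
      (sum_mul_dotProduct_mulVec_le_of_nonpos hσ he heig (by omega) (u := u ∘ Fin.natAdd k)
        (OrthonormalFamily.comp hu (Fin.natAdd_injective m k)) (w := lam ∘ Fin.natAdd k)
        (hlam.comp_monotone (Fin.strictMono_natAdd k).monotone)
        fun j => (hneg _ (Nat.le_add_right k j)).le)
  · rw [heig, dotProduct_smul, he, if_pos rfl, smul_eq_mul, mul_one]

/-- For a real symmetric `V × V` matrix `B` with eigenvalues
`σ` in decreasing order (witnessed by an orthonormal eigenbasis `e`), and reals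
`λ 0 ≥ … ≥ λ (k-1) > 0 > λ k ≥ … ≥ λ (K-1)`, every orthonormal family
`u : Fin K → ℝ^V` satisfies
`∑ j, λ j * uⱼᵀ B uⱼ ≤ ∑ j < k, λ j * σ j + ∑ j ≥ k, λ j * σ (V-K+j)`,
with equality attained at the corresponding eigenvectors. -/
theorem weighted_rayleigh_sum_mixed_signs
    (V K k : ℕ) (hKV : K ≤ V) (hkK : k ≤ K)
    (B : Matrix (Fin V) (Fin V) ℝ) (hB : B.IsSymm)
    (σ : Fin V → ℝ) (hσ : Antitone σ)
    (e : Fin V → (Fin V → ℝ))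
    (he : ∀ i j : Fin V, e i ⬝ᵥ e j = if i = j then 1 else 0)
    (heig : ∀ j : Fin V, B.mulVec (e j) = σ j • e j)
    (lam : Fin K → ℝ) (hlam : Antitone lam)
    (hpos : ∀ j : Fin K, (j : ℕ) < k → 0 < lam j)
    (hneg : ∀ j : Fin K, k ≤ (j : ℕ) → lam j < 0) :
    (∀ u : Fin K → (Fin V → ℝ),
      (∀ i j : Fin K, u i ⬝ᵥ u j = if i = j then 1 else 0) →
      ∑ j : Fin K, lam j * (u j ⬝ᵥ B.mulVec (u j)) ≤
        ∑ j : Fin K, lam j * σ (mgrafIdx V K k hKV j)) ∧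
    ∑ j : Fin K, lam j *
        (e (mgrafIdx V K k hKV j) ⬝ᵥ B.mulVec (e (mgrafIdx V K k hKV j)))
      = ∑ j : Fin K, lam j * σ (mgrafIdx V K k hKV j) :=
  weighted_rayleigh_sum_mixed_signs_general V K k hKV hkK B σ hσ e he heig lam hlam hpos hneg
end

section
/- Let π(x) = 1/(1 + exp(−x)) be the logistic function, fix μ ∈ ℝ and a ∈ {0,1}, and define f(x) = a(μ + x) + log(1 − π(μ + x)) and g(x) = (a − π(μ))·x. Then for all real x < y one has f(x) < f(y) if and only if g(x) < g(y); in particular f is strictly increasing if and only if g is strictly increasing, and f is strictly decreasing if and only if g is strictly decreasing. -/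
/-!
Writing `σ` for the logistic function, `1 - σ t = σ (-t)` and `log σ (-t) = log σ t - t`, so
`f x = log σ (-(μ + x))` when `a = 0` and `f x = log σ (μ + x)` when `a = 1`: `f` is strictly
decreasing, respectively increasing. The slope `a - σ μ` of `g` has the same sign, since
`0 < σ μ < 1`.
-/

open Real

lemma StrictMono.not_strictAnti {α β : Type*} [LinearOrder α] [Nontrivial α] [Preorder β]
    {f : α → β} (hf : StrictMono f) : ¬StrictAnti f := fun hf' ↦ by
  obtain ⟨x, y, hxy⟩ := exists_pair_lt α
  exact (hf hxy).asymm (hf' hxy)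

section SameDirection

variable {α β : Type*} [LinearOrder α] [Nontrivial α] [Preorder β] {f g : α → β}

theorem lt_iff_lt_and_strictMono_iff_and_strictAnti_iff_of_strictMono
    (hf : StrictMono f) (hg : StrictMono g) :
    (∀ x y, x < y → (f x < f y ↔ g x < g y)) ∧
    (StrictMono f ↔ StrictMono g) ∧ (StrictAnti f ↔ StrictAnti g) :=
  ⟨fun _ _ h ↦ iff_of_true (hf h) (hg h), iff_of_true hf hg,
    iff_of_false hf.not_strictAnti hg.not_strictAnti⟩

theorem lt_iff_lt_and_strictMono_iff_and_strictAnti_iff_of_strictAnti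
    (hf : StrictAnti f) (hg : StrictAnti g) :
    (∀ x y, x < y → (f x < f y ↔ g x < g y)) ∧
    (StrictMono f ↔ StrictMono g) ∧ (StrictAnti f ↔ StrictAnti g) :=
  ⟨fun _ _ h ↦ iff_of_false (hf h).asymm (hg h).asymm,
    iff_of_false (fun h ↦ h.not_strictAnti hf) (fun h ↦ h.not_strictAnti hg), iff_of_true hf hg⟩

end SameDirection

namespace Real

lemma strictMono_log_sigmoid : StrictMono fun t ↦ log (sigmoid t) :=
  fun _ _ h ↦ log_lt_log (sigmoid_pos _) (sigmoid_lt h)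

lemma log_sigmoid_neg (t : ℝ) : log (sigmoid (-t)) = log (sigmoid t) - t := by
  rw [← sigmoid_mul_rexp_neg, log_mul (sigmoid_pos t).ne' (exp_pos _).ne', log_exp]
  ring

end Real

/-- With `π x = 1/(1 + exp(-x))` the logistic function,
`μ ∈ ℝ` and `a ∈ {0,1}`, set `f x = a(μ + x) + log (1 - π (μ + x))` and
`g x = (a - π μ) x`. Then for all `x < y`, `f x < f y ↔ g x < g y`; in
particular `f` is strictly increasing iff `g` is, and strictly decreasing
iff `g` is. -/
theorem loglik_monotone_iff_linear_surrogate (μ a : ℝ) (ha : a = 0 ∨ a = 1)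
    (f g : ℝ → ℝ)
    (hf : f = fun x : ℝ =>
      a * (μ + x) + Real.log (1 - 1 / (1 + Real.exp (-(μ + x)))))
    (hg : g = fun x : ℝ => (a - 1 / (1 + Real.exp (-μ))) * x) :
    (∀ x y : ℝ, x < y → (f x < f y ↔ g x < g y)) ∧
    (StrictMono f ↔ StrictMono g) ∧
    (StrictAnti f ↔ StrictAnti g) := by
  simp only [one_div, ← sigmoid_def, ← sigmoid_neg] at hf hg
  subst hf hg
  rcases ha with rfl | rfl
  · apply lt_iff_lt_and_strictMono_iff_and_strictAnti_iff_of_strictAnti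
    · simp only [zero_mul, zero_add]
      exact strictMono_log_sigmoid.comp_strictAnti (f := fun x ↦ -(μ + x)) fun _ _ h ↦ by linarith
    · exact strictAnti_mul_left (by linarith [sigmoid_pos μ])
  · apply lt_iff_lt_and_strictMono_iff_and_strictAnti_iff_of_strictMono
    · simp only [one_mul, log_sigmoid_neg, add_sub_cancel]
      exact strictMono_log_sigmoid.comp (f := (μ + ·)) fun _ _ h ↦ by linarith
    · exact strictMono_mul_left_of_pos (by linarith [sigmoid_lt_one μ])
end
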